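/- Let (X_n, Y_n) ∈ ℝ₊² and define the explicit two-stage scheme y₁ = Y_n · exp((h/2)(X_n - 3/2)) · exp(J/2), X_{n+1} = X_n · exp(-h·y₁ + h), Y_{n+1} = Y_n · exp((h/2)(X_{n+1} + X_n - 3)) · exp(J), for fixed h > 0, J ∈ ℝ. Viewing (X_{n+1}, Y_{n+1}) as a smooth function of (X_n, Y_n) on ℝ₊², the Jacobian M satisfies Mᵀ K(X_{n+1},Y_{n+1}) M = K(X_n,Y_n), where K(x,y) = [[0, -1/(xy)], [1/(xy), 0]]. Equivalently, det M = (X_{n+1} Y_{n+1})/(X_n Y_n). -/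

import Mathlib

open Matrix

/-- The Jacobian matrix of a map `f : ℝⁿ → ℝᵐ` at a point `z`. -/
noncomputable def jacobianMatrix {n m : ℕ} (f : (Fin n → ℝ) → (Fin m → ℝ))
    (z : Fin n → ℝ) : Matrix (Fin m) (Fin n) ℝ :=
  Matrix.of fun i j => fderiv ℝ f z (Pi.single j 1) i

/-- First stage of the explicit two-stage K-partitioned Runge--Kutta scheme. -/
noncomputable def lvStage (h J : ℝ) (z : Fin 2 → ℝ) : ℝ :=
  z 1 * Real.exp (h / 2 * (z 0 - 3 / 2)) * Real.exp (J / 2)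

/-- The one-step map of the explicit scheme (Scheme 4 of the paper). -/
noncomputable def lvStep (h J : ℝ) (z : Fin 2 → ℝ) : Fin 2 → ℝ :=
  ![z 0 * Real.exp (-(h * lvStage h J z) + h),
    z 1 * Real.exp (h / 2 * (z 0 * Real.exp (-(h * lvStage h J z) + h) + z 0 - 3))
      * Real.exp J]

/-- The Lotka--Volterra structure matrix `K(x,y) = [[0,-1/(xy)],[1/(xy),0]]`. -/
noncomputable def lvK (w : Fin 2 → ℝ) : Matrix (Fin 2) (Fin 2) ℝ :=
  !![0, -(1 / (w 0 * w 1)); 1 / (w 0 * w 1), 0]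


/-!
In logarithmic coordinates `(u, v) = (log x, log y)`, in which `K` becomes the canonical
symplectic form, the scheme is a Störmer–Verlet step: a half kick in `v`, a drift in `u`, and
another half kick in `v`. In the original coordinates each of these shears has Jacobian
determinant `x'y'/(xy)`, an identity that the chain rule makes multiplicative under composition.
For `2 × 2` matrices `Mᵀ (c J₂) M = (det M) (c J₂)`, which turns it into K-symplecticity.
-/

lemma jacobianMatrix_eq_toMatrix' {n m : ℕ} (f : (Fin n → ℝ) → Fin m → ℝ) (z : Fin n → ℝ) :
    jacobianMatrix f z = LinearMap.toMatrix' (fderiv ℝ f z : (Fin n → ℝ) →ₗ[ℝ] Fin m → ℝ) :=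
  rfl

lemma jacobianMatrix_apply {n m : ℕ} {f : (Fin n → ℝ) → Fin m → ℝ} {z : Fin n → ℝ}
    (hf : DifferentiableAt ℝ f z) (i : Fin m) (j : Fin n) :
    jacobianMatrix f z i j = fderiv ℝ (fun w => f w i) z (Pi.single j 1) := by
  rw [fderiv_apply hf]
  rfl

lemma jacobianMatrix_comp {n m p : ℕ} {g : (Fin m → ℝ) → Fin p → ℝ}
    {f : (Fin n → ℝ) → Fin m → ℝ} {z : Fin n → ℝ}
    (hg : DifferentiableAt ℝ g (f z)) (hf : DifferentiableAt ℝ f z) :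
    jacobianMatrix (g ∘ f) z = jacobianMatrix g (f z) * jacobianMatrix f z := by
  rw [jacobianMatrix_eq_toMatrix', fderiv_comp z hg hf]
  exact LinearMap.toMatrix'_comp _ _

/-- Written without division, this is the K-symplecticity of `f` at `z` for `K = J₂ / (xy)`. -/
def PreservesLogAreaAt (f : (Fin 2 → ℝ) → Fin 2 → ℝ) (z : Fin 2 → ℝ) : Prop :=
  DifferentiableAt ℝ f z ∧ (jacobianMatrix f z).det * (z 0 * z 1) = f z 0 * f z 1

lemma PreservesLogAreaAt.comp {g f : (Fin 2 → ℝ) → Fin 2 → ℝ} {z : Fin 2 → ℝ}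
    (hg : PreservesLogAreaAt g (f z)) (hf : PreservesLogAreaAt f z) :
    PreservesLogAreaAt (g ∘ f) z := by
  refine ⟨hg.1.comp z hf.1, ?_⟩
  rw [jacobianMatrix_comp hg.1 hf.1, det_mul, mul_assoc, hf.2, hg.2, Function.comp_apply]

def verticalShear (g : ℝ → ℝ) (w : Fin 2 → ℝ) : Fin 2 → ℝ := ![w 0, w 1 * g (w 0)]

def horizontalShear (g : ℝ → ℝ) (w : Fin 2 → ℝ) : Fin 2 → ℝ := ![w 0 * g (w 1), w 1]

section Shear

variable {g : ℝ → ℝ} {z : Fin 2 → ℝ}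

lemma differentiableAt_verticalShear (hg : DifferentiableAt ℝ g (z 0)) :
    DifferentiableAt ℝ (verticalShear g) z :=
  differentiableAt_pi.2 <| Fin.forall_fin_two.2 ⟨differentiableAt_apply 0 z,
    (differentiableAt_apply 1 z).mul (hg.comp z (differentiableAt_apply 0 z))⟩

lemma differentiableAt_horizontalShear (hg : DifferentiableAt ℝ g (z 1)) :
    DifferentiableAt ℝ (horizontalShear g) z :=
  differentiableAt_pi.2 <| Fin.forall_fin_two.2
    ⟨(differentiableAt_apply 0 z).mul (hg.comp z (differentiableAt_apply 1 z)),
      differentiableAt_apply 1 z⟩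

lemma jacobianMatrix_verticalShear (hg : DifferentiableAt ℝ g (z 0)) :
    jacobianMatrix (verticalShear g) z = !![1, 0; z 1 * deriv g (z 0), g (z 0)] := by
  have hy' : HasFDerivAt (fun w : Fin 2 → ℝ => w 1 * g (w 0)) _ z :=
    (hasFDerivAt_apply 1 z).mul (hg.hasFDerivAt.comp z (hasFDerivAt_apply 0 z))
  ext i j
  fin_cases i <;> fin_cases j <;>
    simp [jacobianMatrix_apply (differentiableAt_verticalShear hg), verticalShear,
      (hasFDerivAt_apply 0 z).fderiv, hy'.fderiv]

lemma jacobianMatrix_horizontalShear (hg : DifferentiableAt ℝ g (z 1)) :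
    jacobianMatrix (horizontalShear g) z = !![g (z 1), z 0 * deriv g (z 1); 0, 1] := by
  have hx' : HasFDerivAt (fun w : Fin 2 → ℝ => w 0 * g (w 1)) _ z :=
    (hasFDerivAt_apply 0 z).mul (hg.hasFDerivAt.comp z (hasFDerivAt_apply 1 z))
  ext i j
  fin_cases i <;> fin_cases j <;>
    simp [jacobianMatrix_apply (differentiableAt_horizontalShear hg), horizontalShear,
      hx'.fderiv, (hasFDerivAt_apply 1 z).fderiv]

lemma preservesLogAreaAt_verticalShear (hg : DifferentiableAt ℝ g (z 0)) :
    PreservesLogAreaAt (verticalShear g) z := by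
  refine ⟨differentiableAt_verticalShear hg, ?_⟩
  rw [jacobianMatrix_verticalShear hg, det_fin_two_of]
  simp only [verticalShear, cons_val_zero, cons_val_one]
  ring

lemma preservesLogAreaAt_horizontalShear (hg : DifferentiableAt ℝ g (z 1)) :
    PreservesLogAreaAt (horizontalShear g) z := by
  refine ⟨differentiableAt_horizontalShear hg, ?_⟩
  rw [jacobianMatrix_horizontalShear hg, det_fin_two_of]
  simp only [horizontalShear, cons_val_zero, cons_val_one]
  ring

end Shear

lemma lvStep_eq_comp (h J : ℝ) :
    lvStep h J = verticalShear (fun x => Real.exp (h / 2 * (x - 3 / 2)) * Real.exp (J / 2)) ∘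
      horizontalShear (fun y => Real.exp (-(h * y) + h)) ∘
      verticalShear (fun x => Real.exp (h / 2 * (x - 3 / 2)) * Real.exp (J / 2)) := by
  funext z i
  fin_cases i <;>
    simp only [lvStep, lvStage, verticalShear, horizontalShear, Function.comp_apply,
      cons_val_zero, cons_val_one, mul_assoc, ← Real.exp_add] <;>
    ring_nf

lemma preservesLogAreaAt_lvStep (h J : ℝ) (z : Fin 2 → ℝ) :
    PreservesLogAreaAt (lvStep h J) z := by
  rw [lvStep_eq_comp]
  exact (preservesLogAreaAt_verticalShear (by fun_prop)).comp
    ((preservesLogAreaAt_horizontalShear (by fun_prop)).comp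
      (preservesLogAreaAt_verticalShear (by fun_prop)))

lemma Matrix.transpose_mul_skew_mul_fin_two {R : Type*} [CommRing R]
    (M : Matrix (Fin 2) (Fin 2) R) (c : R) :
    Mᵀ * !![0, -c; c, 0] * M = M.det • !![0, -c; c, 0] := by
  ext i j
  fin_cases i <;> fin_cases j <;>
    simp only [Fin.zero_eta, Fin.mk_one, mul_apply, transpose_apply, of_apply, cons_val',
      cons_val_fin_one, Fin.sum_univ_two, cons_val_zero, cons_val_one, det_fin_two, smul_apply,
      smul_eq_mul] <;>
    ring

theorem stmt_17_general (h J : ℝ) :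
    ∀ z : Fin 2 → ℝ, 0 < z 0 → 0 < z 1 →
      (jacobianMatrix (lvStep h J) z)ᵀ * lvK (lvStep h J z) * jacobianMatrix (lvStep h J) z
        = lvK z ∧
      (jacobianMatrix (lvStep h J) z).det
        = (lvStep h J z 0 * lvStep h J z 1) / (z 0 * z 1) := by
  intro z hx hy
  have hdet := eq_div_of_mul_eq (by positivity) (preservesLogAreaAt_lvStep h J z).2
  have hstep : 0 < lvStep h J z 0 * lvStep h J z 1 := by
    simp only [lvStep, cons_val_zero, cons_val_one]
    positivity
  refine ⟨?_, hdet⟩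
  rw [lvK, Matrix.transpose_mul_skew_mul_fin_two, hdet, lvK, smul_of]
  generalize lvStep h J z 0 * lvStep h J z 1 = p at hstep ⊢
  ext i j
  fin_cases i <;> fin_cases j <;> simp [field]

/-- The explicit stochastic K-partitioned Runge--Kutta scheme (Scheme 4) is
K-symplectic: its Jacobian `M` satisfies `Mᵀ K(Xₙ₊₁,Yₙ₊₁) M = K(Xₙ,Yₙ)`, equivalently
`det M = (Xₙ₊₁Yₙ₊₁)/(XₙYₙ)`. -/
theorem stmt_17 (h J : ℝ) (hh : 0 < h) :
    ∀ z : Fin 2 → ℝ, 0 < z 0 → 0 < z 1 →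
      (jacobianMatrix (lvStep h J) z)ᵀ * lvK (lvStep h J z) * jacobianMatrix (lvStep h J) z
        = lvK z ∧
      (jacobianMatrix (lvStep h J) z).det
        = (lvStep h J z 0 * lvStep h J z 1) / (z 0 * z 1) :=
  stmt_17_general h J
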